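/- The generalized Apostol-Euler polynomials of order 2α at γ = −1/2 satisfy the recurrence Σ_{k=0}^{n} C(n,k) · (Σ_{i=0}^{n−k} ⟨2α⟩_i · (−1)^i · S(n−k,i)) · E_k^{(2α)}(x; −1/2) = 2^{4α} · x^n for all n ≥ 0. -/

import Mathlib

open Finset PowerSeries

/-- Stirling numbers of the second kind. -/
def stirling2 : ℕ → ℕ → ℕ
  | 0, 0 => 1
  | 0, _ + 1 => 0
  | _ + 1, 0 => 0
  | n + 1, k + 1 => (k + 1) * stirling2 n (k + 1) + stirling2 n k

/-- The falling factorial `⟨x⟩_i = x(x-1)⋯(x-i+1)`. -/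
def fall (x : ℚ) (m : ℕ) : ℚ := ∏ j ∈ Finset.range m, (x - j)

/-!
Multiplying the defining relation by `2^{2α}` turns it into
`(2 - e^t)^{2α} · Σ E_k t^k/k! = 2^{4α} e^{xt}`. Expanding `2 - e^t = 1 - (e^t - 1)` binomially
and using the exponential generating function `(e^t - 1)^i = i! Σ_m S(m,i) t^m/m!` shows that
`m! [t^m] (2 - e^t)^{2α} = Σ_i ⟨2α⟩_i (-1)^i S(m,i)`; the recurrence is then the comparison of
the `n`-th coefficients, the coefficients of a product of exponential generating functions being a
binomial convolution.
-/

open Nat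

theorem stirling2_eq_stirlingSecond : stirling2 = stirlingSecond := by
  funext m k
  induction m generalizing k with
  | zero => cases k <;> rfl
  | succ m ih =>
    cases k with
    | zero => rfl
    | succ k => rw [stirling2, ih, ih, stirlingSecond_succ_succ]

theorem fall_natCast (N i : ℕ) : fall N i = N.descFactorial i := by
  rw [fall, ← descPochhammer_eval_eq_prod_range, descPochhammer_eval_eq_descFactorial]

section CommSemiring

variable {R : Type*} [CommSemiring R]

theorem factorial_mul_coeff_succ (f : R⟦X⟧) (m : ℕ) :
    ((m + 1)! : R) * coeff (m + 1) f = m ! * coeff m (d⁄dX R f) := by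
  rw [coeff_derivative, factorial_succ]
  push_cast
  ring

theorem factorial_mul_coeff_mul (f g : R⟦X⟧) (n : ℕ) :
    (n ! : R) * coeff n (f * g) =
      ∑ k ∈ range (n + 1), (n.choose k : R) * (k ! * coeff k f) * ((n - k)! * coeff (n - k) g) := by
  rw [coeff_mul, sum_antidiagonal_eq_sum_range_succ_mk, mul_sum]
  refine sum_congr rfl fun k hk => ?_
  rw [← choose_mul_factorial_mul_factorial (mem_range_succ_iff.1 hk)]
  push_cast
  ring

end CommSemiring

section Algebra

variable {A : Type*} [CommRing A] [Algebra ℚ A]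

theorem derivative_exp_sub_one_pow (k : ℕ) :
    d⁄dX A ((exp A - 1) ^ (k + 1)) =
      (k + 1 : A⟦X⟧) * ((exp A - 1) ^ (k + 1) + (exp A - 1) ^ k) := by
  rw [Derivation.leibniz_pow, map_sub, derivative_exp, Derivation.map_one_eq_zero, sub_zero,
    add_tsub_cancel_right, nsmul_eq_mul, smul_eq_mul]
  push_cast
  ring

theorem factorial_mul_coeff_exp_sub_one_pow (m k : ℕ) :
    (m ! : A) * coeff m ((exp A - 1) ^ k) = (stirlingSecond m k * k ! : ℕ) := by
  induction m generalizing k with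
  | zero => cases k <;> simp
  | succ m ih =>
    cases k with
    | zero => simp [coeff_one]
    | succ k =>
      have hC : (k + 1 : A⟦X⟧) = C (k + 1 : A) := by simp
      rw [factorial_mul_coeff_succ, derivative_exp_sub_one_pow, hC, coeff_C_mul, map_add,
        mul_left_comm, mul_add, ih, ih, stirlingSecond_succ_succ, factorial_succ]
      push_cast
      ring

theorem factorial_mul_coeff_two_sub_exp_pow (N m : ℕ) :
    (m ! : A) * coeff m ((2 - exp A) ^ N) =
      ∑ i ∈ range (m + 1), (N.descFactorial i : A) * (-1) ^ i * stirlingSecond m i := by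
  have hbinom : (2 - exp A) ^ N =
      ∑ i ∈ range (N + 1), C ((-1) ^ i * N.choose i : A) * (exp A - 1) ^ i := by
    rw [show (2 : A⟦X⟧) - exp A = C (-1) * (exp A - 1) + 1 by simp; ring, add_pow]
    refine sum_congr rfl fun i _ => ?_
    rw [one_pow, mul_one, mul_pow, ← map_pow, map_mul, map_natCast]
    ring
  set u : ℕ → A := fun i => N.descFactorial i * (-1) ^ i * stirlingSecond m i
  have hu_N : ∀ i ≥ N + 1, u i = 0 := fun i hi => by
    simp [u, descFactorial_eq_zero_iff_lt.2 (by omega : N < i)]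
  have hu_m : ∀ i ≥ m + 1, u i = 0 := fun i hi => by
    simp [u, stirlingSecond_eq_zero_of_lt (by omega : m < i)]
  calc (m ! : A) * coeff m ((2 - exp A) ^ N)
      = ∑ i ∈ range (N + 1), u i := by
        rw [hbinom, map_sum, mul_sum]
        refine sum_congr rfl fun i _ => ?_
        rw [coeff_C_mul, mul_left_comm, factorial_mul_coeff_exp_sub_one_pow]
        simp only [u, descFactorial_eq_factorial_mul_choose]
        push_cast
        ring
    _ = ∑ i ∈ range (N + m + 1), u i := (eventually_constant_sum hu_N (by omega)).symm
    _ = ∑ i ∈ range (m + 1), u i := eventually_constant_sum hu_m (by omega)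

end Algebra

theorem apostolEuler_recurrence (α : ℕ) (E : ℕ → ℚ → ℚ)
    (hE : ∀ x : ℚ,
      (PowerSeries.C (R := ℚ) (-(1 / 2)) * PowerSeries.exp ℚ + 1) ^ (2 * α) *
          PowerSeries.mk (fun n => E n x / n.factorial) =
        (2 : PowerSeries ℚ) ^ (2 * α) * PowerSeries.mk (fun n => x ^ n / n.factorial))
    (n : ℕ) (x : ℚ) :
    ∑ k ∈ Finset.range (n + 1), (n.choose k : ℚ) *
        (∑ i ∈ Finset.range (n - k + 1),
          fall ((2 * α : ℚ)) i * (-1 : ℚ) ^ i * (stirling2 (n - k) i : ℚ)) * E k x =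
      2 ^ (4 * α) * x ^ n := by
  have hkey : mk (fun k => E k x / k !) * (2 - exp ℚ) ^ (2 * α) =
      C (2 ^ (4 * α)) * mk (fun k => x ^ k / k !) := by
    have h2 : (2 : ℚ⟦X⟧) - exp ℚ = 2 * (C (-(1 / 2)) * exp ℚ + 1) := by
      rw [mul_add, ← mul_assoc, ← map_ofNat C 2, ← map_mul]
      norm_num
      ring
    rw [h2, mul_pow, mul_comm, mul_assoc, hE x, ← mul_assoc, ← pow_add, map_pow, map_ofNat]
    ring
  have hcoeff := congrArg (fun f => (n ! : ℚ) * coeff n f) hkey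
  simp only [factorial_mul_coeff_mul, coeff_C_mul, coeff_mk] at hcoeff
  rw [mul_left_comm, mul_div_cancel₀ _ (by positivity)] at hcoeff
  rw [← hcoeff]
  refine sum_congr rfl fun k _ => ?_
  have h2α : (2 * α : ℚ) = (2 * α : ℕ) := by push_cast; rfl
  rw [factorial_mul_coeff_two_sub_exp_pow, mul_div_cancel₀ _ (by positivity)]
  simp only [h2α, fall_natCast, stirling2_eq_stirlingSecond]
  ring
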